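/- arXiv:1803.08841 — 4 statements merged into one kernel-verified Lean document; each statement's English description precedes it below -/
import Mathlib

section
/- Let τ : ℕ → ℕ be a sequence of delays with τ_m ≤ τ_max for all m, and suppose that for every K ≥ 1 and every window of Kn consecutive indices, at most n indices m in that window satisfy τ_m > Kn. Then for any t, the sum over m from 1 to τ_max of the indicator of the event {τ_{t+m} ≥ m} is at most 2√(τ_max · n). -/
/-!
Split the range `[1, T]` dyadically at the points `2^j n`. An index `m ∈ (Kn, 2Kn]` with
`τ (t + m) ≥ m` has delay `> Kn`, and these indices form a window of `Kn` consecutive iterations,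
so each dyadic block contributes at most `n`. If `2^J n < T ≤ 2^(J+1) n`, the count is thus at most
`(J + 2) n`, and `(J + 2)^2 ≤ 2^(J+2)` turns this into `(J + 2) n ≤ 2 √(T n)`; for `T ≤ 4n` the
trivial bound `T` suffices.
-/

open Finset

lemma Nat.sq_le_two_pow {k : ℕ} (hk : 4 ≤ k) : k ^ 2 ≤ 2 ^ k := by
  induction k, hk using Nat.le_induction with
  | base => norm_num
  | succ k hk ih =>
    calc (k + 1) ^ 2 ≤ 2 * k ^ 2 := by nlinarith
      _ ≤ 2 ^ (k + 1) := by rw [pow_succ 2 k]; omega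

lemma Nat.exists_two_pow_mul_lt_le {n T : ℕ} (hn : 0 < n) (hT : n < T) :
    ∃ J, 2 ^ J * n < T ∧ T ≤ 2 ^ (J + 1) * n := by
  have hex : ∃ J, T ≤ 2 ^ J * n :=
    ⟨T, Nat.lt_two_pow_self.le.trans (Nat.le_mul_of_pos_right _ hn)⟩
  obtain ⟨J, hJ⟩ : ∃ J, Nat.find hex = J + 1 :=
    Nat.exists_eq_add_one.mpr <| Nat.pos_of_ne_zero fun h0 => by
      have := Nat.find_spec hex
      rw [h0, pow_zero, one_mul] at this
      omega
  refine ⟨J, not_le.mp (Nat.find_min hex (by omega)), hJ ▸ Nat.find_spec hex⟩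

def ContentionBounded (n : ℕ) (τ : ℕ → ℕ) : Prop :=
  ∀ K : ℕ, 1 ≤ K → ∀ t0 : ℕ,
    ((Ico t0 (t0 + K * n)).filter (fun m => K * n < τ m)).card ≤ n

/-- The offsets `m ∈ [1, T]` such that iteration `t + m` does not yet see the update of
iteration `t`. -/
def staleOffsets (τ : ℕ → ℕ) (t T : ℕ) : Finset ℕ :=
  (Icc 1 T).filter (fun m => m ≤ τ (t + m))

section

variable {n : ℕ} {τ : ℕ → ℕ}

lemma card_staleOffsets_le_self (t T : ℕ) : (staleOffsets τ t T).card ≤ T :=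
  (card_filter_le _ _).trans (by simp)

lemma ContentionBounded.card_filter_Ioc_le (h : ContentionBounded n τ) {K : ℕ} (hK : 1 ≤ K)
    (t : ℕ) {T : ℕ} (hT : T ≤ 2 * (K * n)) :
    ((Ioc (K * n) T).filter (fun m => m ≤ τ (t + m))).card ≤ n := by
  refine le_trans ?_ (h K hK (t + K * n + 1))
  refine card_le_card_of_injOn (t + ·) (fun m hm => ?_) (fun a _ b _ hab => by simpa using hab)
  simp only [coe_filter, mem_Ioc, Set.mem_ofPred_eq, mem_Ico] at hm ⊢
  omega

lemma ContentionBounded.card_staleOffsets_le (h : ContentionBounded n τ) (t : ℕ)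
    {J T : ℕ} (hT : T ≤ 2 ^ J * n) : (staleOffsets τ t T).card ≤ (J + 1) * n := by
  induction J generalizing T with
  | zero =>
    simpa using (card_staleOffsets_le_self t T).trans (by simpa using hT)
  | succ J ih =>
    by_cases hTJ : T ≤ 2 ^ J * n
    · exact (ih hTJ).trans (Nat.mul_le_mul_right n (by omega))
    · have hsplit : staleOffsets τ t T = staleOffsets τ t (2 ^ J * n) ∪
          (Ioc (2 ^ J * n) T).filter (fun m => m ≤ τ (t + m)) := by
        rw [staleOffsets, staleOffsets, ← filter_union]
        congr 1
        ext m
        simp only [mem_Icc, mem_Ioc, mem_union]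
        omega
      have hblock := h.card_filter_Ioc_le Nat.one_le_two_pow t (T := T)
        (by rw [pow_succ] at hT; linarith)
      calc (staleOffsets τ t T).card
          ≤ (staleOffsets τ t (2 ^ J * n)).card + n := by
            rw [hsplit]
            exact (card_union_le _ _).trans (Nat.add_le_add_left hblock _)
        _ ≤ (J + 1) * n + n := Nat.add_le_add_right (ih le_rfl) n
        _ = (J + 1 + 1) * n := by ring

lemma ContentionBounded.card_staleOffsets_sq_le (h : ContentionBounded n τ) (hn : 0 < n)
    (t T : ℕ) : (staleOffsets τ t T).card ^ 2 ≤ 4 * (T * n) := by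
  set C := (staleOffsets τ t T).card
  have hCT : C ≤ T := card_staleOffsets_le_self t T
  by_cases hsmall : T ≤ 4 * n
  · nlinarith
  obtain ⟨J, hJlt, hJle⟩ := Nat.exists_two_pow_mul_lt_le hn (by omega : n < T)
  have hJ : 2 ≤ J := by
    by_contra! hJ
    have : 2 ^ (J + 1) ≤ 4 := by interval_cases J <;> norm_num
    nlinarith
  calc C ^ 2 ≤ ((J + 1 + 1) * n) ^ 2 := Nat.pow_le_pow_left (h.card_staleOffsets_le t hJle) 2
    _ = (J + 2) ^ 2 * n ^ 2 := by ring
    _ ≤ 2 ^ (J + 2) * n ^ 2 := Nat.mul_le_mul_right _ (Nat.sq_le_two_pow (by omega))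
    _ = 4 * (2 ^ J * n) * n := by ring
    _ ≤ 4 * (T * n) := by nlinarith

end

theorem stmt_1_general (n τmax : ℕ) (hn : 0 < n) (τ : ℕ → ℕ)
    (hcontention : ∀ K : ℕ, 1 ≤ K → ∀ t0 : ℕ,
      ((Finset.Ico t0 (t0 + K * n)).filter (fun m => K * n < τ m)).card ≤ n)
    (t : ℕ) :
    (∑ m ∈ Finset.Icc 1 τmax, (if m ≤ τ (t + m) then (1 : ℝ) else 0))
      ≤ 2 * Real.sqrt (τmax * n) := by
  have hsq : ((staleOffsets τ t τmax).card : ℝ) ^ 2 ≤ (2 * Real.sqrt (τmax * n)) ^ 2 := by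
    rw [mul_pow, Real.sq_sqrt (by positivity)]
    exact_mod_cast ContentionBounded.card_staleOffsets_sq_le hcontention hn t τmax
  rw [sum_boole]
  exact (pow_le_pow_iff_left₀ (by positivity) (by positivity) two_ne_zero).mp hsq

theorem stmt_1 (n τmax : ℕ) (hn : 0 < n) (τ : ℕ → ℕ)
    (hbound : ∀ m, τ m ≤ τmax)
    (hcontention : ∀ K : ℕ, 1 ≤ K → ∀ t0 : ℕ,
      ((Finset.Ico t0 (t0 + K * n)).filter (fun m => K * n < τ m)).card ≤ n)
    (t : ℕ) :
    (∑ m ∈ Finset.Icc 1 τmax, (if m ≤ τ (t + m) then (1 : ℝ) else 0))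
      ≤ 2 * Real.sqrt (τmax * n) :=
  stmt_1_general n τmax hn τ hcontention t
end

section
/- For α ∈ (0,1) and σ = 0 (no noise): if τ is chosen large enough that 2(1−α)^τ ≤ α, then after the adversarial schedule (τ steps of the recursion x_{k+1} = (1−α)x_k followed by subtracting the stale gradient α x_0), the iterate satisfies |x_{τ+1}| = |(1−α)^τ − α| · |x_0| ≥ (α/2)|x_0|, whereas the delay-free execution gives |x_{τ+1}| = (1−α)^{τ+1}|x_0|. -/
theorem stmt_7 (α : ℝ) (hα0 : 0 < α) (hα1 : α < 1) (τ : ℕ)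
    (hτ : 2 * (1 - α) ^ τ ≤ α) (x0 : ℝ) :
    (α / 2) * |x0| ≤ |((1 - α) ^ τ - α) * x0| ∧
    |(1 - α) ^ (τ + 1) * x0| = (1 - α) ^ (τ + 1) * |x0| := by
  have hp : (0:ℝ) ≤ (1 - α) ^ (τ + 1) := pow_nonneg (by linarith) _
  constructor
  · rw [abs_mul]
    apply mul_le_mul_of_nonneg_right _ (abs_nonneg x0)
    have : α / 2 ≤ α - (1 - α) ^ τ := by linarith
    calc α / 2 ≤ α - (1 - α) ^ τ := this
    _ ≤ |(1 - α) ^ τ - α| := by rw [abs_sub_comm]; exact le_abs_self _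
  · rw [abs_mul, abs_of_nonneg hp]
end

section
/- The function φ(x) = plog(‖x − x*‖² ε^{-1}), where plog(y) = log(ey) for y ≥ 1 and plog(y) = y for y ≤ 1, is Lipschitz continuous on ℝ^d with Lipschitz constant 2/√ε. Consequently W_t(u, x_{t-1}, …, x_0) = (ε/(2αcε − α²M²))·plog(‖u − x*‖²ε^{-1}) + t is H-Lipschitz in u with H = 2√ε(2αcε − α²M²)^{-1}, provided 2αcε − α²M² > 0. -/
/-- The piecewise logarithm. -/
noncomputable def plog (x : ℝ) : ℝ := if 1 ≤ x then Real.log (Real.exp 1 * x) else x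

/-!
With `r = ‖u - x*‖ / √ε` we have `plog (‖u - x*‖² ε⁻¹) = plog (r²)`, and `s ↦ plog (s²)` equals
`s²` on `[0, 1]` and `1 + 2 log s` on `[1, ∞)`: its slope is `2s` resp. `2/s`, at most `2`
everywhere. So it is `2`-Lipschitz on `[0, ∞)`, and composing with the `1/√ε`-Lipschitz map
`u ↦ r` gives the constant `2/√ε`. The rate function `W_t` is the image of this under the
affine map `y ↦ ε / (2αcε - α²M²) * y + t`.
-/

open Real

lemma plog_of_le_one {x : ℝ} (hx : x ≤ 1) : plog x = x := by
  rcases hx.lt_or_eq with hx | rfl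
  · exact if_neg hx.not_ge
  · simp [plog]

lemma plog_of_one_le {x : ℝ} (hx : 1 ≤ x) : plog x = 1 + log x := by
  rw [plog, if_pos hx, log_mul (exp_ne_zero 1) (by positivity), log_exp]

lemma monotone_plog : Monotone plog := by
  intro x y hxy
  rcases le_total y 1 with hy | hy
  · rwa [plog_of_le_one hy, plog_of_le_one (hxy.trans hy)]
  rcases le_total x 1 with hx | hx
  · rw [plog_of_le_one hx, plog_of_one_le hy]
    linarith [log_nonneg hy]
  · rw [plog_of_one_le hx, plog_of_one_le hy]
    gcongr

lemma plog_sq_sub_plog_sq_le {a b : ℝ} (ha : 0 ≤ a) (hab : a ≤ b) :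
    plog (b ^ 2) - plog (a ^ 2) ≤ 2 * (b - a) := by
  rcases le_total b 1 with hb | hb
  · rw [plog_of_le_one (by nlinarith), plog_of_le_one (by nlinarith)]
    nlinarith
  have hb0 : 0 < b := by linarith
  have hlog_b : log b ≤ b - 1 := log_le_sub_one_of_pos hb0
  rw [plog_of_one_le (by nlinarith), log_pow]
  rcases le_total a 1 with ha1 | ha1
  · rw [plog_of_le_one (by nlinarith)]
    push_cast
    nlinarith [sq_nonneg (1 - a)]
  · have ha0 : 0 < a := by linarith
    have hlog_ba : log b - log a ≤ b - a := calc
      log b - log a = log (b / a) := (log_div hb0.ne' ha0.ne').symm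
      _ ≤ b / a - 1 := log_le_sub_one_of_pos (by positivity)
      _ = (b - a) / a := by field_simp
      _ ≤ b - a := div_le_self (by linarith) ha1
    rw [plog_of_one_le (by nlinarith), log_pow]
    push_cast
    linarith

lemma lipschitzOnWith_plog_sq : LipschitzOnWith 2 (fun s => plog (s ^ 2)) (Set.Ici 0) := by
  refine LipschitzOnWith.of_dist_le_mul fun a ha b hb => ?_
  wlog hab : a ≤ b generalizing a b
  · rw [dist_comm, dist_comm a]
    exact this b hb a ha (le_of_not_ge hab)
  have hmono : plog (a ^ 2) ≤ plog (b ^ 2) := monotone_plog (pow_le_pow_left₀ ha hab 2)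
  rw [Real.dist_eq, Real.dist_eq, abs_of_nonpos (by linarith), abs_of_nonpos (by linarith)]
  push_cast
  linarith [plog_sq_sub_plog_sq_le (Set.mem_Ici.mp ha) hab]

lemma lipschitzWith_plog_sq_norm_sub_div {E : Type*} [SeminormedAddCommGroup E] (x : E) {ε : ℝ}
    (hε : 0 < ε) : LipschitzWith (2 / √ε).toNNReal (fun u : E => plog (‖u - x‖ ^ 2 * ε⁻¹)) := by
  have hs : 0 < √ε := sqrt_pos.mpr hε
  have hφ : ∀ u : E, plog (‖u - x‖ ^ 2 * ε⁻¹) = plog ((‖u - x‖ / √ε) ^ 2) := fun u => by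
    rw [div_pow, sq_sqrt hε.le, div_eq_mul_inv]
  refine LipschitzWith.of_dist_le_mul fun u v => ?_
  rw [hφ, hφ, Real.coe_toNNReal _ (by positivity)]
  calc dist (plog ((‖u - x‖ / √ε) ^ 2)) (plog ((‖v - x‖ / √ε) ^ 2))
      ≤ 2 * dist (‖u - x‖ / √ε) (‖v - x‖ / √ε) :=
        lipschitzOnWith_plog_sq.dist_le_mul _ (Set.mem_Ici.mpr (by positivity))
          _ (Set.mem_Ici.mpr (by positivity))
    _ = 2 / √ε * |‖u - x‖ - ‖v - x‖| := by
        rw [Real.dist_eq, ← sub_div, abs_div, abs_of_pos hs]; ring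
    _ ≤ 2 / √ε * dist u v := by
        gcongr
        simpa [dist_eq_norm] using abs_norm_sub_norm_le (u - x) (v - x)

lemma LipschitzWith.const_mul_add {X : Type*} [PseudoEMetricSpace X] {f : X → ℝ} {K : ℝ}
    (hf : LipschitzWith K.toNNReal f) {a : ℝ} (ha : 0 ≤ a) (t : ℝ) :
    LipschitzWith (a * K).toNNReal (fun x => a * f x + t) := by
  have := ((lipschitzWith_smul a).comp hf).add (LipschitzWith.const t)
  rw [Real.toNNReal_mul ha, Real.toNNReal_of_nonneg ha]
  simpa [Real.nnnorm_of_nonneg ha] using this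

theorem stmt_11_general (d : ℕ) (xstar : EuclideanSpace ℝ (Fin d)) (ε α c M : ℝ)
    (hε : 0 < ε)
    (hpos : α ^ 2 * M ^ 2 < 2 * α * c * ε) (t : ℝ) :
    LipschitzWith (2 / Real.sqrt ε).toNNReal
      (fun u : EuclideanSpace ℝ (Fin d) => plog (‖u - xstar‖ ^ 2 * ε⁻¹)) ∧
    LipschitzWith (2 * Real.sqrt ε * (2 * α * c * ε - α ^ 2 * M ^ 2)⁻¹).toNNReal
      (fun u : EuclideanSpace ℝ (Fin d) =>
        ε / (2 * α * c * ε - α ^ 2 * M ^ 2) * plog (‖u - xstar‖ ^ 2 * ε⁻¹) + t) := by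
  have hφ := lipschitzWith_plog_sq_norm_sub_div xstar hε
  have hD : 0 < 2 * α * c * ε - α ^ 2 * M ^ 2 := by linarith
  have hconst : 2 * √ε * (2 * α * c * ε - α ^ 2 * M ^ 2)⁻¹
      = ε / (2 * α * c * ε - α ^ 2 * M ^ 2) * (2 / √ε) := by
    field_simp
    rw [sq_sqrt hε.le]
  refine ⟨hφ, ?_⟩
  rw [hconst]
  exact hφ.const_mul_add (by positivity) t

theorem stmt_11 (d : ℕ) (xstar : EuclideanSpace ℝ (Fin d)) (ε α c M : ℝ)
    (hε : 0 < ε) (hα : 0 < α) (hc : 0 < c) (hM : 0 < M)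
    (hpos : α ^ 2 * M ^ 2 < 2 * α * c * ε) (t : ℝ) :
    LipschitzWith (2 / Real.sqrt ε).toNNReal
      (fun u : EuclideanSpace ℝ (Fin d) => plog (‖u - xstar‖ ^ 2 * ε⁻¹)) ∧
    LipschitzWith (2 * Real.sqrt ε * (2 * α * c * ε - α ^ 2 * M ^ 2)⁻¹).toNNReal
      (fun u : EuclideanSpace ℝ (Fin d) =>
        ε / (2 * α * c * ε - α ^ 2 * M ^ 2) * plog (‖u - xstar‖ ^ 2 * ε⁻¹) + t) :=
  stmt_11_general d xstar ε α c M hε hpos t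
end

section
/- Under the assumptions of Theorem 4 (W a rate supermartingale with horizon B, H-Lipschitz in the first coordinate, and α²HLMC√d < 1 with C = 2√(τ_max n)), and additionally with E[W_0(x_0)] ≤ (ε/(2αcε − α²M²))·plog(e‖x_0 − x*‖²/ε), the choice α = cεϑ/(M² + 2√ε·LMC√d) for ϑ ∈ (0,1] yields the failure-probability bound P(F_T) ≤ ((M² + 4√ε·LM√(τ_max n)·√d)/(c²εϑT))·plog(e‖x_0 − x*‖²/ε). -/
/-! Write `Δ = 2αcε - α²M²` for the rate of the supermartingale and `S = M² + 2√ε·LMC√d`, so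
that the chosen step size is `α = cεϑ / S` and `H = 2√ε / Δ`. The slack `1 - α²HLMC√d` of
Theorem 4 then satisfies `(1 - α²HLMC√d)·Δ = 2αcε - α²S = αcε(2 - ϑ)`, so the bound of Theorem 4
collapses to `S·plog(e‖x₀ - x*‖²/ε) / (c²εϑ(2 - ϑ)T)`, and `2 - ϑ ≥ 1`. -/

theorem plog_nonneg {x : ℝ} (hx : 0 ≤ x) : 0 ≤ plog x := by
  unfold plog
  split_ifs with h
  · exact Real.log_nonneg (by nlinarith [Real.add_one_le_exp (1 : ℝ)])
  · exact hx

theorem slack_mul_rate_eq {α c ε ϑ m b s H : ℝ}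
    (hH : H * (2 * α * c * ε - α ^ 2 * m) = 2 * s) (hα : α * (m + 2 * s * b) = c * ε * ϑ) :
    (1 - α ^ 2 * H * b) * (2 * α * c * ε - α ^ 2 * m) = α * c * ε * (2 - ϑ) := by
  linear_combination (-(α ^ 2 * b)) * hH - α * hα

theorem div_mul_le_div_mul_of_mul_eq {w P κ Δ q T : ℝ} (hΔ : 0 < Δ) (hq : 0 ≤ q) (hT : 0 ≤ T)
    (hκ : κ * Δ = q) (hw : w ≤ P / Δ) : w / (κ * T) ≤ P / (q * T) := by
  have hκ' : κ = q / Δ := by rw [← hκ, mul_div_cancel_right₀ _ hΔ.ne']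
  rw [hκ', div_mul_eq_mul_div, div_div_eq_mul_div]
  gcongr
  exact (le_div_iff₀ hΔ).mp hw

theorem stmt_14_general (d n : ℕ) (τmax : ℕ) (ε c L M ϑ T : ℝ) (α H C D p EW0 : ℝ)
    (hε : 0 < ε) (hc : 0 < c) (hL : 0 < L) (hM : 0 < M) (hT : 0 < T)
    (hϑ0 : 0 < ϑ) (hϑ1 : ϑ ≤ 1)
    (hD : 0 ≤ D)  -- D stands for ‖x₀ - x*‖²
    (hC : C = 2 * Real.sqrt (τmax * n))
    (hα : α = c * ε * ϑ / (M ^ 2 + 2 * Real.sqrt ε * L * M * C * Real.sqrt d))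
    (hH : H = 2 * Real.sqrt ε * (2 * α * c * ε - α ^ 2 * M ^ 2)⁻¹)
    (hdenom : 0 < 2 * α * c * ε - α ^ 2 * M ^ 2)
    -- the initial value bound on the rate supermartingale
    (hEW0 : EW0 ≤ ε / (2 * α * c * ε - α ^ 2 * M ^ 2) * plog (Real.exp 1 * D / ε))
    -- the conclusion of Theorem 4: the failure probability p is bounded
    (hp : p ≤ EW0 / ((1 - α ^ 2 * H * L * M * C * Real.sqrt d) * T)) :
    p ≤ (M ^ 2 + 4 * Real.sqrt ε * L * M * Real.sqrt (τmax * n) * Real.sqrt d)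
        / (c ^ 2 * ε * ϑ * T) * plog (Real.exp 1 * D / ε) := by
  set P := plog (Real.exp 1 * D / ε)
  set S := M ^ 2 + 2 * Real.sqrt ε * L * M * C * Real.sqrt d
  have hC0 : 0 ≤ C := by rw [hC]; positivity
  have hS : 0 < S := by positivity
  have hα0 : 0 < α := by rw [hα]; positivity
  have hαS : α * S = c * ε * ϑ := by rw [hα]; field_simp
  have hHΔ : H * (2 * α * c * ε - α ^ 2 * M ^ 2) = 2 * Real.sqrt ε := by
    rw [hH, mul_assoc, inv_mul_cancel₀ hdenom.ne', mul_one]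
  have hslack := slack_mul_rate_eq (b := L * M * C * Real.sqrt d) hHΔ (by rw [← hαS]; ring)
  calc p ≤ EW0 / ((1 - α ^ 2 * H * L * M * C * Real.sqrt d) * T) := hp
    _ ≤ ε * P / (α * c * ε * (2 - ϑ) * T) := by
      have hϑ2 : 0 < 2 - ϑ := by linarith
      exact div_mul_le_div_mul_of_mul_eq hdenom (by positivity) hT.le
        (by rw [← hslack]; ring) (by rwa [div_mul_eq_mul_div] at hEW0)
    _ = S * P / (c ^ 2 * ε * ϑ * (2 - ϑ) * T) := by
      rw [show c ^ 2 * ε * ϑ = c * (α * S) by rw [hαS]; ring]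
      field_simp
    _ ≤ S * P / (c ^ 2 * ε * ϑ * T) := by
      have hP : 0 ≤ P := plog_nonneg (by positivity)
      refine div_le_div_of_nonneg_left (by positivity) (by positivity) ?_
      have : 0 < c ^ 2 * ε * ϑ * T := by positivity
      nlinarith
    _ = _ := by simp only [S, hC]; ring

/-- Corollary 7: failure-probability bound for lock-free SGD with the chosen
learning rate, obtained by algebraic substitution in the bound of Theorem 4. -/
theorem stmt_14 (d n : ℕ) (τmax : ℕ) (ε c L M ϑ T : ℝ) (α H C D p EW0 : ℝ)
    (hd : 0 < d) (hn : 0 < n) (hτ : 0 < τmax)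
    (hε : 0 < ε) (hc : 0 < c) (hL : 0 < L) (hM : 0 < M) (hT : 0 < T)
    (hϑ0 : 0 < ϑ) (hϑ1 : ϑ ≤ 1)
    (hD : 0 ≤ D)  -- D stands for ‖x₀ - x*‖²
    (hC : C = 2 * Real.sqrt (τmax * n))
    (hα : α = c * ε * ϑ / (M ^ 2 + 2 * Real.sqrt ε * L * M * C * Real.sqrt d))
    (hH : H = 2 * Real.sqrt ε * (2 * α * c * ε - α ^ 2 * M ^ 2)⁻¹)
    (hdenom : 0 < 2 * α * c * ε - α ^ 2 * M ^ 2)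
    (hsmall : α ^ 2 * H * L * M * C * Real.sqrt d < 1)
    -- the initial value bound on the rate supermartingale
    (hEW0 : EW0 ≤ ε / (2 * α * c * ε - α ^ 2 * M ^ 2) * plog (Real.exp 1 * D / ε))
    -- the conclusion of Theorem 4: the failure probability p is bounded
    (hp : p ≤ EW0 / ((1 - α ^ 2 * H * L * M * C * Real.sqrt d) * T)) :
    p ≤ (M ^ 2 + 4 * Real.sqrt ε * L * M * Real.sqrt (τmax * n) * Real.sqrt d)
        / (c ^ 2 * ε * ϑ * T) * plog (Real.exp 1 * D / ε) :=
  stmt_14_general d n τmax ε c L M ϑ T α H C D p EW0 hε hc hL hM hT hϑ0 hϑ1 hD hC hα hH hdenom hEW0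
    hp
end
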